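/- arXiv:1510.01253 — 5 statements merged into one kernel-verified Lean document; each statement's English description precedes it below -/
import Mathlib

section
/- Let I ⊆ ℝ be an interval and f : I → ℝ a continuous non-constant function. Then the group Is(f) = {φ : I → I an isometry of I for the Euclidean metric such that f ∘ φ = f} is either trivial, or isomorphic to ℤ/2ℤ, or to ℤ, or to the infinite dihedral group D∞. -/
/-!
Every isometry of `ℝ` is a translation `x ↦ x + b` or a reflection `x ↦ c - x`. The lengths
of the translations in `G` form an additive subgroup of `ℝ`. It cannot be dense: `f` is
continuous on `I` and invariant under these translations, so it would be constant on `I`.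
Hence it is cyclic, `ℤ a`. If `G` contains no reflection, it is generated by the translation
by `a`. If it contains a reflection `x ↦ c - x`, then `r i ↦ (x ↦ x + i a)`,
`sr i ↦ (x ↦ c - i a - x)` maps `D∞` onto `G`; this map is injective when `a ≠ 0`, and when
`a = 0` it gives `G = {1, x ↦ c - x}`.
-/

open IsometryEquiv AddSubgroup Subgroup
open scoped Pointwise

namespace IsometryEquiv

section Translations

variable {X : Type*} [AddCommGroup X] [PseudoEMetricSpace X] [IsIsometricVAdd Xᵃᵒᵖ X]

def translationHom : Multiplicative X →* (X ≃ᵢ X) where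
  toFun b := addRight b.toAdd
  map_one' := by ext; simp
  map_mul' b c := by ext x; simp [mul_apply, add_right_comm, add_assoc]

theorem addRight_zero : addRight (0 : X) = 1 :=
  map_one (translationHom (X := X))

theorem addRight_zsmul (n : ℤ) (b : X) : addRight (n • b) = addRight b ^ n :=
  map_zpow (translationHom (X := X)) (.ofAdd b) n

def translationLengths (G : Subgroup (X ≃ᵢ X)) : AddSubgroup X :=
  Subgroup.toAddSubgroup' (G.comap translationHom)

@[simp]
theorem mem_translationLengths {G : Subgroup (X ≃ᵢ X)} {b : X} :
    b ∈ translationLengths G ↔ addRight b ∈ G :=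
  Iff.rfl

variable [IsIsometricVAdd X X]

theorem subLeft_mul_subLeft (c d : X) : subLeft c * subLeft d = addRight (c - d) := by
  ext x; simp only [mul_apply, subLeft_apply, addRight_apply]; abel

theorem addRight_mul_subLeft (b c : X) : addRight b * subLeft c = subLeft (c + b) := by
  ext x; simp only [mul_apply, subLeft_apply, addRight_apply]; abel

end Translations

theorem real_eq_addRight_or_subLeft (g : ℝ ≃ᵢ ℝ) :
    g = addRight (g 0) ∨ g = subLeft (g 0) := by
  have hdist (x y : ℝ) : (g x - g y) ^ 2 = (x - y) ^ 2 := by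
    rw [← sq_abs, ← Real.dist_eq, g.dist_eq, Real.dist_eq, sq_abs]
  have h01 := hdist 1 0
  -- a point of `ℝ` is determined by its distances to two distinct points
  have affine (x : ℝ) : g x = g 0 + (g 1 - g 0) * x := by
    linear_combination (g 1 - g 0 - 2 * (g x - g 0)) / 2 * h01 +
      (g 1 - g 0) / 2 * (hdist x 0 - hdist x 1)
  rcases sq_eq_one_iff.mp (h01.trans (by norm_num)) with h | h
  · left; ext x; rw [affine, h]; simp [add_comm]
  · right; ext x; rw [affine, h]; simp [sub_eq_add_neg]

theorem subLeft_ne_one (c : ℝ) : subLeft c ≠ 1 := by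
  intro h
  have h0 : c - 0 = 0 := congr($h 0)
  have h1 : c - 1 = 1 := congr($h 1)
  linarith

end IsometryEquiv

theorem ContinuousOn.eq_of_invariant_dense_translations {X Y : Type*} [AddGroup X]
    [TopologicalSpace X] [ContinuousConstVAdd X X] [TopologicalSpace Y] [T1Space Y]
    {I S : Set X} {f : X → Y} (hf : ContinuousOn f I) (hS : Dense S)
    (hinv : ∀ b ∈ S, ∀ x ∈ I, x + b ∈ I ∧ f (x + b) = f x)
    {x y : X} (hx : x ∈ I) (hy : y ∈ I) : f y = f x := by
  have hsub : x +ᵥ S ⊆ I := by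
    rintro _ ⟨b, hb, rfl⟩
    exact (hinv b hb x hx).1
  have hconst : f '' (x +ᵥ S) ⊆ {f x} := by
    rintro _ ⟨_, ⟨b, hb, rfl⟩, rfl⟩
    exact (hinv b hb x hx).2
  have hy' := ((hf y hy).mono hsub).mem_closure_image (hS.vadd x y)
  simpa using closure_mono hconst hy'

namespace IsometryEquiv

noncomputable def dihedralHom (a c : ℝ) : DihedralGroup 0 →* (ℝ ≃ᵢ ℝ) where
  toFun
    | .r i => addRight (ZMod.castHom (dvd_refl 0) ℝ i * a)
    | .sr i => subLeft (c - ZMod.castHom (dvd_refl 0) ℝ i * a)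
  map_one' := by rw [DihedralGroup.one_def]; ext; simp
  map_mul' := by
    rintro (i | i) (j | j) <;> ext x <;>
      simp only [DihedralGroup.r_mul_r, DihedralGroup.r_mul_sr, DihedralGroup.sr_mul_r,
        DihedralGroup.sr_mul_sr, map_add, map_sub, mul_apply, addRight_apply, subLeft_apply] <;>
      ring

@[simp]
theorem dihedralHom_r (a c : ℝ) (i : ZMod 0) :
    dihedralHom a c (.r i) = addRight (ZMod.castHom (dvd_refl 0) ℝ i * a) :=
  rfl

@[simp]
theorem dihedralHom_sr (a c : ℝ) (i : ZMod 0) :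
    dihedralHom a c (.sr i) = subLeft (c - ZMod.castHom (dvd_refl 0) ℝ i * a) :=
  rfl

theorem range_dihedralHom {G : Subgroup (ℝ ≃ᵢ ℝ)} {a c : ℝ}
    (ha : translationLengths G = zmultiples a) (hc : subLeft c ∈ G) :
    (dihedralHom a c).range = G := by
  have htrans (b : ℝ) : addRight b ∈ G ↔ ∃ k : ℤ, (k : ℝ) * a = b := by
    simp [← mem_translationLengths, ha, mem_zmultiples_iff]
  ext g
  constructor
  · rintro ⟨i | i, rfl⟩
    · exact (htrans _).2 ⟨ZMod.cast i, by simp⟩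
    · rw [dihedralHom_sr, sub_eq_add_neg, ← addRight_mul_subLeft]
      exact G.mul_mem ((htrans _).2 ⟨-ZMod.cast i, by simp⟩) hc
  · intro hg
    rcases real_eq_addRight_or_subLeft g with h | h
    · obtain ⟨k, hk⟩ := (htrans (g 0)).1 (h ▸ hg)
      exact ⟨.r (Int.cast k), by simp [hk, ← h]⟩
    · have : addRight (c - g 0) ∈ G := subLeft_mul_subLeft c (g 0) ▸ G.mul_mem hc (h ▸ hg)
      obtain ⟨k, hk⟩ := (htrans _).1 this
      exact ⟨.sr (Int.cast k), by simp [hk, ← h]⟩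

theorem dihedralHom_injective {a : ℝ} (ha : a ≠ 0) (c : ℝ) :
    Function.Injective (dihedralHom a c) := by
  rw [injective_iff_map_eq_one]
  rintro (i | i) h
  · have hi : ZMod.castHom (dvd_refl 0) ℝ i * a = 0 := by simpa using congrArg (· 0) h
    rw [DihedralGroup.one_def,
      ZMod.castHom_injective ℝ (((mul_eq_zero.1 hi).resolve_right ha).trans (map_zero _).symm)]
  · exact absurd h (subLeft_ne_one _)

theorem card_eq_two_of_translationLengths_eq_bot {G : Subgroup (ℝ ≃ᵢ ℝ)} {c : ℝ}
    (hbot : translationLengths G = ⊥) (hc : subLeft c ∈ G) : Nat.card G = 2 := by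
  rw [← zmultiples_zero_eq_bot] at hbot
  refine (Nat.card_eq_two_iff' 1).2
    ⟨⟨subLeft c, hc⟩, fun h => subLeft_ne_one c congr($h.1), ?_⟩
  rintro ⟨g, hg⟩ hg1
  obtain ⟨i | i, rfl⟩ := (range_dihedralHom hbot hc).ge hg
  · exact absurd (Subtype.ext (by simp [addRight_zero])) hg1
  · exact Subtype.ext (by simp)

theorem eq_zpowers_addRight {G : Subgroup (ℝ ≃ᵢ ℝ)} {a : ℝ}
    (ha : translationLengths G = zmultiples a) (hrefl : ∀ c, subLeft c ∉ G) :
    G = zpowers (addRight a) := by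
  ext g
  simp only [mem_zpowers_iff, ← addRight_zsmul]
  constructor
  · intro hg
    have h := (real_eq_addRight_or_subLeft g).resolve_right fun h => hrefl _ (h ▸ hg)
    obtain ⟨k, hk⟩ := mem_zmultiples_iff.1 (ha ▸ mem_translationLengths.2 (h ▸ hg))
    exact ⟨k, hk ▸ h.symm⟩
  · rintro ⟨k, rfl⟩
    exact mem_translationLengths.1 (ha ▸ zsmul_mem_zmultiples a k)

theorem zpowersHom_addRight_injective {a : ℝ} (ha : a ≠ 0) :
    Function.Injective (zpowersHom (ℝ ≃ᵢ ℝ) (addRight a)) := by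
  intro m n h
  have h0 : m.toAdd • a = n.toAdd • a := by simpa [← addRight_zsmul] using congr($h 0)
  exact smul_left_injective ℤ ha h0

theorem subgroup_classification_of_translationLengths_eq_zmultiples
    (G : Subgroup (ℝ ≃ᵢ ℝ)) {a : ℝ} (ha : translationLengths G = zmultiples a) :
    Subsingleton G ∨
      Nonempty (G ≃* Multiplicative (ZMod 2)) ∨
      Nonempty (G ≃* Multiplicative ℤ) ∨
      Nonempty (G ≃* DihedralGroup 0) := by
  by_cases hrefl : ∃ c, subLeft c ∈ G
  · obtain ⟨c, hc⟩ := hrefl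
    rcases eq_or_ne a 0 with rfl | ha0
    · rw [zmultiples_zero_eq_bot] at ha
      exact Or.inr <| Or.inl
        ⟨mulEquivOfPrimeCardEq (card_eq_two_of_translationLengths_eq_bot ha hc) (by simp)⟩
    · exact Or.inr <| Or.inr <| Or.inr
        ⟨(MulEquiv.subgroupCongr (range_dihedralHom ha hc).symm).trans
          (MonoidHom.ofInjective (dihedralHom_injective ha0 c)).symm⟩
  · push Not at hrefl
    obtain rfl := eq_zpowers_addRight ha hrefl
    rcases eq_or_ne a 0 with rfl | ha0
    · rw [addRight_zero, zpowers_one_eq_bot]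
      exact Or.inl inferInstance
    · exact Or.inr <| Or.inr <| Or.inl
        ⟨(MonoidHom.ofInjective (zpowersHom_addRight_injective ha0)).symm⟩

end IsometryEquiv

theorem isometry_group_of_function_classification_general
    (I : Set ℝ) (f : ℝ → ℝ)
    (hf : ContinuousOn f I)
    (hnc : ∃ x ∈ I, ∃ y ∈ I, f x ≠ f y)
    (G : Subgroup (ℝ ≃ᵢ ℝ))
    (hG : ∀ φ : ℝ ≃ᵢ ℝ, φ ∈ G ↔ ((⇑φ) '' I = I ∧ ∀ x ∈ I, f (φ x) = f x)) :
    Subsingleton G ∨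
      Nonempty (G ≃* Multiplicative (ZMod 2)) ∨
      Nonempty (G ≃* Multiplicative ℤ) ∨
      Nonempty (G ≃* DihedralGroup 0) := by
  obtain ⟨x, hx, y, hy, hxy⟩ := hnc
  have hinv :
      ∀ b ∈ (translationLengths G : Set ℝ), ∀ z ∈ I, z + b ∈ I ∧ f (z + b) = f z := by
    intro b hb z hz
    obtain ⟨himage, hfinv⟩ := (hG _).1 (mem_translationLengths.1 hb)
    exact ⟨himage ▸ Set.mem_image_of_mem _ hz, hfinv z hz⟩
  obtain ⟨a, ha⟩ : ∃ a, translationLengths G = zmultiples a := by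
    refine ((translationLengths G).dense_or_cyclic.resolve_left fun hd => hxy ?_).imp
      fun a ha => ha.trans (zmultiples_eq_closure a).symm
    exact (hf.eq_of_invariant_dense_translations hd hinv hx hy).symm
  exact subgroup_classification_of_translationLengths_eq_zmultiples G ha

/-- Let `I ⊆ ℝ` be an interval and `f` a continuous non-constant
function on `I`. Then the group `Is(f)` of Euclidean isometries of `I` preserving `f`
is either trivial, or isomorphic to `ℤ/2ℤ`, to `ℤ`, or to the infinite dihedral group. -/
theorem isometry_group_of_function_classification
    (I : Set ℝ) (hI : I.OrdConnected) (f : ℝ → ℝ)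
    (hf : ContinuousOn f I)
    (hnc : ∃ x ∈ I, ∃ y ∈ I, f x ≠ f y)
    (G : Subgroup (ℝ ≃ᵢ ℝ))
    (hG : ∀ φ : ℝ ≃ᵢ ℝ, φ ∈ G ↔ ((⇑φ) '' I = I ∧ ∀ x ∈ I, f (φ x) = f x)) :
    Subsingleton G ∨
      Nonempty (G ≃* Multiplicative (ZMod 2)) ∨
      Nonempty (G ≃* Multiplicative ℤ) ∨
      Nonempty (G ≃* DihedralGroup 0) :=
  isometry_group_of_function_classification_general I f hf hnc G hG
end

section
/- Let Π be a group generated by involutions and containing a subgroup K isomorphic to the Klein four-group. If Γ ≤ Π is a subgroup of index 4 without 2-torsion, then Γ is generated by elements of the form x·δ with x ∈ K and δ² = 1 (and hence Γ is normal in Π with quotient isomorphic to (ℤ/2ℤ)²). -/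
/-!
`P` acts on the four cosets of `Γ`. If `t² = 1` and `t` fixes a coset `gΓ`, then `g⁻¹tg ∈ Γ`
squares to `1`, so `t = 1`: elements of order two act without fixed points. On a four-element set
the identity and the fixed-point-free involutions form a group (the Klein four-subgroup of `S₄`),
so every element of `P` acts as one of them. Elements of `Γ` fix the coset `Γ`, hence act
trivially, so `Γ` is the kernel of the action: it is normal, with a quotient of order four and
exponent two. Finally `Γ ∩ K = 1` and `|K| = 4`, so `K` is a transversal of `Γ`, and Schreier's
lemma applied to the involutive generators `t` of `P` yields generators
`k t r⁻¹ = (k r⁻¹)(r t r⁻¹)` of `Γ` with `k, r ∈ K`.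
-/

open Equiv Subgroup

namespace Equiv.Perm

variable {α β : Type*}

def IsFreeInvolution (σ : Perm α) : Prop :=
  σ * σ = 1 ∧ ∀ x, σ x = x → σ = 1

instance [Fintype α] [DecidableEq α] : DecidablePred (IsFreeInvolution (α := α)) :=
  fun σ => inferInstanceAs (Decidable (σ * σ = 1 ∧ ∀ x, σ x = x → σ = 1))

theorem isFreeInvolution_permCongrHom_iff (e : α ≃ β) {σ : Perm α} :
    IsFreeInvolution (e.permCongrHom σ) ↔ IsFreeInvolution σ := by
  have hone (τ : Perm α) : e.permCongrHom τ = 1 ↔ τ = 1 :=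
    map_eq_one_iff _ e.permCongrHom.injective
  unfold IsFreeInvolution
  rw [← map_mul, hone, hone, ← e.forall_congr_right]
  simp only [permCongrHom_coe, permCongr_apply, symm_apply_apply, EmbeddingLike.apply_eq_iff_eq]

set_option maxRecDepth 10000 in
theorem IsFreeInvolution.mul_of_fin_four :
    ∀ σ τ : Perm (Fin 4), IsFreeInvolution σ → IsFreeInvolution τ →
      IsFreeInvolution (σ * τ) := by
  decide

theorem IsFreeInvolution.mul (hα : Nat.card α = 4) {σ τ : Perm α}
    (hσ : IsFreeInvolution σ) (hτ : IsFreeInvolution τ) : IsFreeInvolution (σ * τ) := by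
  have : Finite α := Nat.finite_of_card_ne_zero (by omega)
  let e := Finite.equivFinOfCardEq hα
  rw [← isFreeInvolution_permCongrHom_iff e] at hσ hτ ⊢
  rw [map_mul]
  exact mul_of_fin_four _ _ hσ hτ

def freeInvolutions (hα : Nat.card α = 4) : Subgroup (Perm α) where
  carrier := {σ | IsFreeInvolution σ}
  mul_mem' := IsFreeInvolution.mul hα
  one_mem' := ⟨mul_one 1, fun _ _ => rfl⟩
  inv_mem' {σ} hσ := by
    rwa [Set.mem_ofPred_eq, inv_eq_of_mul_eq_one_right hσ.1]

end Equiv.Perm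

theorem IsKleinFour.of_card_eq_four_of_mul_self {G : Type*} [Group G] (hcard : Nat.card G = 4)
    (hmul : ∀ x : G, x * x = 1) : IsKleinFour G := by
  have : Finite G := Nat.finite_of_card_ne_zero (by omega)
  refine ⟨hcard, ?_⟩
  have hdvd : Monoid.exponent G ∣ 2 :=
    Monoid.exponent_dvd_of_forall_pow_eq_one fun x => (pow_two x).trans (hmul x)
  have hne : Monoid.exponent G ≠ 1 := by
    rw [Ne, Monoid.exp_eq_one_iff, ← Finite.card_le_one_iff_subsingleton, hcard]
    decide
  exact ((Nat.dvd_prime Nat.prime_two).mp hdvd).resolve_left hne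

theorem IsKleinFour.of_mulEquiv {G H : Type*} [Group G] [Group H] [IsKleinFour H] (e : G ≃* H) :
    IsKleinFour G :=
  ⟨(Nat.card_congr e.toEquiv).trans card_four,
    (Monoid.exponent_eq_of_mulEquiv e).trans exponent_two⟩

instance : IsKleinFour (Multiplicative (ZMod 2) × Multiplicative (ZMod 2)) :=
  .of_card_eq_four_of_mul_self (by simp) (by decide)

section CosetAction

variable {P : Type*} [Group P] {Γ : Subgroup P}

theorem isFreeInvolution_toPermHom_of_mul_self (htor : ∀ g ∈ Γ, g * g = 1 → g = 1) {t : P}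
    (ht : t * t = 1) : (MulAction.toPermHom P (P ⧸ Γ) t).IsFreeInvolution := by
  refine ⟨by rw [← map_mul, ht, map_one], fun x hx => ?_⟩
  obtain ⟨g, rfl⟩ := QuotientGroup.mk_surjective x
  have hconj : g⁻¹ * (t * g) ∈ Γ := QuotientGroup.eq.mp (hx : ((t * g : P) : P ⧸ Γ) = g).symm
  have hsq : g⁻¹ * (t * g) * (g⁻¹ * (t * g)) = 1 := by
    rw [show g⁻¹ * (t * g) * (g⁻¹ * (t * g)) = g⁻¹ * (t * t) * g by group, ht, mul_one,
      inv_mul_cancel]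
  rw [right_eq_mul.mp (inv_mul_eq_one.mp (htor _ hconj hsq)), map_one]

theorem isFreeInvolution_toPermHom_of_closure {T : Set P} (hT : ∀ t ∈ T, t * t = 1)
    (hclosure : closure T = ⊤) (htor : ∀ g ∈ Γ, g * g = 1 → g = 1)
    (hcard : Nat.card (P ⧸ Γ) = 4) (g : P) :
    (MulAction.toPermHom P (P ⧸ Γ) g).IsFreeInvolution := by
  have hle : closure T ≤ (Perm.freeInvolutions hcard).comap (MulAction.toPermHom P (P ⧸ Γ)) :=
    closure_le _ |>.mpr fun t ht => isFreeInvolution_toPermHom_of_mul_self htor (hT t ht)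
  exact hle (hclosure ▸ mem_top g)

theorem ker_toPermHom_eq_of_isFreeInvolution
    (hfree : ∀ g : P, (MulAction.toPermHom P (P ⧸ Γ) g).IsFreeInvolution) :
    (MulAction.toPermHom P (P ⧸ Γ)).ker = Γ := by
  refine le_antisymm (normalCore_eq_ker Γ ▸ Γ.normalCore_le) fun g hg => ?_
  refine (hfree g).2 (1 : P) ?_
  show ((g * 1 : P) : P ⧸ Γ) = (1 : P)
  rw [mul_one, QuotientGroup.eq, mul_one]
  exact Γ.inv_mem hg

theorem isKleinFour_quotient_of_isFreeInvolution
    (hfree : ∀ g : P, (MulAction.toPermHom P (P ⧸ Γ) g).IsFreeInvolution)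
    (hidx : Γ.index = 4) [Γ.Normal] : IsKleinFour (P ⧸ Γ) := by
  refine .of_card_eq_four_of_mul_self (Γ.index_eq_card ▸ hidx) fun x => ?_
  induction x using QuotientGroup.induction_on with | H g => ?_
  rw [← QuotientGroup.mk_mul, QuotientGroup.eq_one_iff,
    ← ker_toPermHom_eq_of_isFreeInvolution hfree, MonoidHom.mem_ker, map_mul]
  exact (hfree g).1

end CosetAction

theorem exists_surjective_ker_eq_of_isKleinFour {P G : Type*} [Group P] [Group G]
    [IsKleinFour G] (Γ : Subgroup P) [Γ.Normal] [IsKleinFour (P ⧸ Γ)] :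
    ∃ φ : P →* G, Function.Surjective φ ∧ φ.ker = Γ := by
  obtain ⟨e⟩ := IsKleinFour.nonempty_mulEquiv (G₁ := P ⧸ Γ) (G₂ := G)
  exact ⟨(e : P ⧸ Γ →* G).comp (QuotientGroup.mk' Γ),
    e.surjective.comp (QuotientGroup.mk'_surjective Γ),
    by rw [MonoidHom.ker_mulEquiv_comp, QuotientGroup.ker_mk']⟩

namespace Subgroup

variable {G : Type*} [Group G] {H K : Subgroup G}

theorem isComplement'_of_disjoint_of_card_eq_index (hdisj : Disjoint H K)
    (hcard : Nat.card K = H.index) (hidx : H.index ≠ 0) : IsComplement' H K := by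
  refine IsComplement'.symm (isComplement_subgroup_right_iff_bijective.mpr ?_)
  have : Finite (G ⧸ H) := Nat.finite_of_card_ne_zero (H.index_eq_card ▸ hidx)
  refine Function.Injective.bijective_of_nat_card_le ?_ (by rw [← index_eq_card]; exact hcard.ge)
  rintro ⟨a, ha⟩ ⟨b, hb⟩ hab
  have hmem : a⁻¹ * b ∈ H := QuotientGroup.eq.mp hab
  exact Subtype.ext (inv_mul_eq_one.mp
    (disjoint_def.mp hdisj hmem (K.mul_mem (K.inv_mem ha) hb)))

theorem exists_closure_eq_of_isComplement' (hHK : IsComplement' H K) {T : Set G}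
    (hT : ∀ t ∈ T, t * t = 1) (hclosure : closure T = ⊤) :
    ∃ S : Set G, S ⊆ {g | ∃ x ∈ K, ∃ δ : G, δ * δ = 1 ∧ g = x * δ} ∧ closure S = H := by
  have hdecomp {k r t : G} (hk : k ∈ K) (hr : r ∈ K) (ht : t * t = 1) :
      ∃ x ∈ K, ∃ δ : G, δ * δ = 1 ∧ k * t * r⁻¹ = x * δ := by
    refine ⟨k * r⁻¹, K.mul_mem hk (K.inv_mem hr), r * t * r⁻¹, ?_, by group⟩
    rw [show r * t * r⁻¹ * (r * t * r⁻¹) = r * (t * t) * r⁻¹ by group, ht, mul_one,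
      mul_inv_cancel]
  refine ⟨_, ?_, closure_mul_image_eq hHK K.one_mem hclosure⟩
  rintro - ⟨-, ⟨k, hk, t, ht, rfl⟩, rfl⟩
  exact hdecomp hk (hHK.toRightFun (k * t)).2 (hT t ht)

end Subgroup

/-- Let `P` be a group generated by involutions and containing a
subgroup `K` isomorphic to the Klein four-group. If `Γ ≤ P` has index 4 and no
2-torsion, then `Γ` is generated by elements of the form `x·δ` with `x ∈ K` and
`δ² = 1`; hence `Γ` is normal in `P` with quotient isomorphic to `(ℤ/2ℤ)²`. -/
theorem gen_of_index_four_no_two_torsion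
    {P : Type*} [Group P]
    (hgenP : ∃ T : Set P, (∀ t ∈ T, t * t = 1) ∧ Subgroup.closure T = ⊤)
    (K Γ : Subgroup P)
    (hK : Nonempty (K ≃* Multiplicative (ZMod 2) × Multiplicative (ZMod 2)))
    (hidx : Γ.index = 4)
    (htor : ∀ g ∈ Γ, g * g = 1 → g = 1) :
    (∃ S : Set P,
      S ⊆ {g : P | ∃ x ∈ K, ∃ δ : P, δ * δ = 1 ∧ g = x * δ} ∧
      Subgroup.closure S = Γ) ∧
    Γ.Normal ∧
      ∃ φ : P →* Multiplicative (ZMod 2) × Multiplicative (ZMod 2),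
        Function.Surjective φ ∧ φ.ker = Γ := by
  obtain ⟨T, hT, hclosure⟩ := hgenP
  obtain ⟨eK⟩ := hK
  have : IsKleinFour K := .of_mulEquiv eK
  have hfree := isFreeInvolution_toPermHom_of_closure hT hclosure htor (Γ.index_eq_card ▸ hidx)
  have hnormal : Γ.Normal := ker_toPermHom_eq_of_isFreeInvolution hfree ▸ MonoidHom.normal_ker _
  have : IsKleinFour (P ⧸ Γ) := isKleinFour_quotient_of_isFreeInvolution hfree hidx
  have hdisj : Disjoint Γ K := disjoint_def.mpr fun hxΓ hxK =>
    htor _ hxΓ (congrArg Subtype.val (IsKleinFour.mul_self ⟨_, hxK⟩))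
  have hcompl : IsComplement' Γ K := isComplement'_of_disjoint_of_card_eq_index hdisj
    (by rw [hidx, IsKleinFour.card_four]) (by omega)
  exact ⟨exists_closure_eq_of_isComplement' hcompl hT hclosure, hnormal,
    exists_surjective_ker_eq_of_isKleinFour Γ⟩
end

section
/- Let I ⊆ ℝ be an open interval, f : I → ℝ a smooth function that does not vanish on I, G : I → ℝ a primitive of -1/f, and β ∈ ℝ. Then the map σ : I × ℝ → I × ℝ, σ(x,y) = (x, 2(G(x)+β) - y), is an isometry of the Lorentzian metric 2 dx dy + f(x) dy² on I × ℝ; that is, for every (x,y), the Jacobian matrix J of σ at (x,y) satisfies Jᵀ · M(x) · J = M(x), where M(x) is the symmetric matrix [[0,1],[1,f(x)]] representing the metric. -/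
/-- The generic reflection `σ(x,y) = (x, 2(G(x)+β) − y)`, where
`G' = -1/f`, is an isometry of the Lorentzian metric `2dxdy + f(x)dy²` on `I × ℝ`:
its Jacobian `J` at every point satisfies `Jᵀ M(x) J = M(x)` with
`M(x) = [[0,1],[1,f(x)]]`. -/
theorem generic_reflection_is_isometry
    (I : Set ℝ) (hIo : IsOpen I) (hIc : I.OrdConnected)
    (f : ℝ → ℝ) (hf : ContDiffOn ℝ (⊤ : ℕ∞) f I) (hfne : ∀ x ∈ I, f x ≠ 0)
    (G : ℝ → ℝ) (hG : ∀ x ∈ I, HasDerivAt G (-(1 / f x)) x) (β : ℝ) :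
    ∀ x ∈ I, ∀ y : ℝ,
      ∃ L : ℝ × ℝ →L[ℝ] ℝ × ℝ,
        HasFDerivAt (fun p : ℝ × ℝ => (p.1, 2 * (G p.1 + β) - p.2)) L (x, y) ∧
        (!![(L (1, 0)).1, (L (0, 1)).1; (L (1, 0)).2, (L (0, 1)).2]).transpose *
            (!![0, 1; 1, f x] : Matrix (Fin 2) (Fin 2) ℝ) *
            !![(L (1, 0)).1, (L (0, 1)).1; (L (1, 0)).2, (L (0, 1)).2] =
          !![0, 1; 1, f x] := by
  intro x hx y
  set A : ℝ × ℝ →L[ℝ] ℝ := ContinuousLinearMap.fst ℝ ℝ ℝ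
  set B : ℝ × ℝ →L[ℝ] ℝ := ContinuousLinearMap.snd ℝ ℝ ℝ
  set L : ℝ × ℝ →L[ℝ] ℝ × ℝ :=
    A.prod ((2 * -(1 / f x)) • A - B)
  refine ⟨L, ?_, ?_⟩
  · have h1 : HasFDerivAt (fun p : ℝ × ℝ => G p.1) ((-(1 / f x)) • A) (x, y) := by
      have := ((hG x hx).hasFDerivAt).comp (x, y) (hasFDerivAt_fst (𝕜 := ℝ) (p := (x, y)))
      refine HasFDerivAt.congr_fderiv this ?_
      ext p <;> simp [A, mul_comm]
    have h2 : HasFDerivAt (fun p : ℝ × ℝ => 2 * (G p.1 + β) - p.2)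
        ((2 * -(1 / f x)) • A - B) (x, y) := by
      have := (((h1.add_const β).const_mul 2)).sub (hasFDerivAt_snd (p := (x, y)))
      refine HasFDerivAt.congr_fderiv this ?_
      ext p <;> simp [A, B, mul_assoc, smul_smul]
    exact HasFDerivAt.prodMk (hasFDerivAt_fst (p := (x, y))) h2
  · have hfx := hfne x hx
    have hL10 : (L (1, 0) : ℝ × ℝ) = (1, 2 * -(1 / f x)) := by
      simp [L, A, B]
    have hL01 : (L (0, 1) : ℝ × ℝ) = (0, -1) := by
      simp [L, A, B]
    rw [hL10, hL01]
    ext i j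
    fin_cases i <;> fin_cases j <;>
      simp [Matrix.mul_apply, Fin.sum_univ_two, Matrix.transpose, Matrix.vecHead,
        Matrix.vecTail] <;>
      field_simp <;> ring
end

section
/- Let N ≥ 1 and let s : {1,…,N} → {0,1} be a sequence of bits, with associated sign sequence σ = ((-1)^{s_1},…,(-1)^{s_N}). Define the reduction of a finite sign sequence as the operation that deletes the first pair of adjacent equal signs and iterates until the sequence is alternating; let M be the length of the resulting reduced sequence. Then |∑_{j=1}^{N} (-1)^{j + s_j}| = M. -/
/-!
Deleting two adjacent equal entries `a, a` at any position of a list leaves its alternating sum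
`x₀ - x₁ + x₂ - ⋯` unchanged, so the reduced sequence `r` has the same alternating sum as the
original sign sequence, which is, up to sign, the sum in the theorem. A sequence of signs in
which neighbours differ is `a, -a, a, -a, …`, and its alternating sum is `±` its length.
-/

/-- One reduction step: delete the leftmost pair of adjacent equal entries
(the prefix up to and including the first element of the deleted pair is
alternating). -/
def ReduceStep (l l' : List ℤ) : Prop :=
  ∃ (l₁ l₂ : List ℤ) (a : ℤ),
    l = l₁ ++ a :: a :: l₂ ∧ l' = l₁ ++ l₂ ∧ List.Chain' (· ≠ ·) (l₁ ++ [a])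

namespace List

theorem alternatingSum_ofFn {G : Type*} [AddCommGroup G] {n : ℕ} (f : Fin n → G) :
    (ofFn f).alternatingSum = ∑ i : Fin n, (-1 : ℤ) ^ (i : ℕ) • f i := by
  rw [alternatingSum_eq_finsetSum]
  simp only [Fin.getElem_fin, List.getElem_ofFn]
  exact Fin.sum_congr' (fun i : Fin n => (-1 : ℤ) ^ (i : ℕ) • f i) length_ofFn

theorem alternatingSum_cons_of_isChain_eq_neg {G : Type*} [AddCommGroup G] (a : G) (l : List G)
    (h : IsChain (fun x y => y = -x) (a :: l)) :
    (a :: l).alternatingSum = (l.length + 1) • a := by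
  induction l generalizing a with
  | nil => simp
  | cons b l ih =>
    obtain ⟨rfl, hl⟩ := isChain_cons_cons.mp h
    rw [alternatingSum_cons, ih _ hl, length_cons, neg_nsmul, sub_neg_eq_add, add_comm]
    exact (succ_nsmul a (l.length + 1)).symm

theorem natAbs_alternatingSum_of_isChain_ne {l : List ℤ} (hsigns : ∀ x ∈ l, x = 1 ∨ x = -1)
    (halt : IsChain (· ≠ ·) l) : l.alternatingSum.natAbs = l.length := by
  cases l with
  | nil => rfl
  | cons a l =>
    have hneg : IsChain (fun x y => y = -x) (a :: l) :=
      halt.imp_of_mem_imp fun x y hx hy hxy => by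
        rcases hsigns x hx with rfl | rfl <;> rcases hsigns y hy with rfl | rfl <;> simp_all
    have ha : a.natAbs = 1 := by rcases hsigns a mem_cons_self with rfl | rfl <;> rfl
    rw [alternatingSum_cons_of_isChain_eq_neg a l hneg, nsmul_eq_mul, Int.natAbs_mul, ha,
      length_cons]
    omega

end List

namespace ReduceStep

variable {l l' : List ℤ}

theorem alternatingSum_eq (h : ReduceStep l l') : l'.alternatingSum = l.alternatingSum := by
  obtain ⟨l₁, l₂, a, rfl, rfl, -⟩ := h
  simp only [List.alternatingSum_append, List.alternatingSum_cons_cons, sub_self, zero_add]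

theorem subset (h : ReduceStep l l') : l' ⊆ l := by
  obtain ⟨l₁, l₂, a, rfl, rfl, -⟩ := h
  intro x hx
  simp only [List.mem_append, List.mem_cons] at hx ⊢
  tauto

end ReduceStep

namespace Relation.ReflTransGen

variable {l r : List ℤ}

theorem alternatingSum_eq_of_reduceStep (h : ReflTransGen ReduceStep l r) :
    r.alternatingSum = l.alternatingSum := by
  induction h with
  | refl => rfl
  | tail _ hstep ih => exact hstep.alternatingSum_eq.trans ih

theorem subset_of_reduceStep (h : ReflTransGen ReduceStep l r) : r ⊆ l := by
  induction h with
  | refl => exact List.Subset.refl l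
  | tail _ hstep ih => exact List.Subset.trans hstep.subset ih

end Relation.ReflTransGen

theorem abs_alternating_sum_eq_reduced_length_general
    (N : ℕ) (s : Fin N → ℕ)
    (r : List ℤ)
    (hred : Relation.ReflTransGen ReduceStep
      (List.ofFn fun j : Fin N => (-1 : ℤ) ^ (s j)) r)
    (halt : List.Chain' (· ≠ ·) r) :
    (∑ j : Fin N, (-1 : ℤ) ^ ((j : ℕ) + 1 + s j)).natAbs = r.length := by
  have hsigns : ∀ x ∈ r, x = 1 ∨ x = -1 := fun x hx => by
    obtain ⟨j, rfl⟩ := List.mem_ofFn.mp (hred.subset_of_reduceStep hx)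
    exact neg_one_pow_eq_or ℤ (s j)
  have hsum : ∑ j : Fin N, (-1 : ℤ) ^ ((j : ℕ) + 1 + s j) = -r.alternatingSum := by
    rw [hred.alternatingSum_eq_of_reduceStep, List.alternatingSum_ofFn, ← Finset.sum_neg_distrib]
    refine Finset.sum_congr rfl fun j _ => ?_
    rw [pow_add, pow_add, smul_eq_mul]
    ring
  rw [hsum, Int.natAbs_neg, List.natAbs_alternatingSum_of_isChain_ne hsigns halt]

/-- For a sign sequence `((-1)^{s_1},…,(-1)^{s_N})`, the absolute
value of `∑_{j=1}^N (-1)^{j+s_j}` equals the length `M` of the reduced sequence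
obtained by iteratively deleting the first pair of adjacent equal signs. -/
theorem abs_alternating_sum_eq_reduced_length
    (N : ℕ) (hN : 1 ≤ N) (s : Fin N → ℕ) (hs : ∀ j, s j ≤ 1)
    (r : List ℤ)
    (hred : Relation.ReflTransGen ReduceStep
      (List.ofFn fun j : Fin N => (-1 : ℤ) ^ (s j)) r)
    (halt : List.Chain' (· ≠ ·) r) :
    (∑ j : Fin N, (-1 : ℤ) ^ ((j : ℕ) + 1 + s j)).natAbs = r.length :=
  abs_alternating_sum_eq_reduced_length_general N s r hred halt
end

section
/- Let a < b be real numbers, C > 0, and let f : [a,b] → ℝ be a C¹ function such that f(a) = f(b) = C², f(x) < C² for all x ∈ (a,b), f'(a) ≠ 0 and f'(b) ≠ 0. Then the improper integral ∫_a^b dx/√(C² - f(x)) is finite. -/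
/-!
Near an endpoint `p`, the nonzero derivative `f' p` forces `|f x - f p| ≥ |f' p| / 2 * |x - p|`,
so the integrand is dominated by a multiple of `1 / √|x - p|`, which is integrable. Away from the
endpoints the integrand is continuous on a compact interval.
-/

open MeasureTheory Set Filter Topology

theorem HasDerivWithinAt.eventually_mul_abs_sub_lt_abs_sub {f : ℝ → ℝ} {f' x : ℝ}
    {s : Set ℝ} (h : HasDerivWithinAt f f' s x) (hf' : f' ≠ 0) :
    ∀ᶠ y in 𝓝[s \ {x}] x, |f'| / 2 * |y - x| < |f y - f x| := by
  have hslope : ∀ᶠ y in 𝓝[s \ {x}] x, |f'| / 2 < |slope f x y| :=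
    (hasDerivWithinAt_iff_tendsto_slope.1 h).abs.eventually
      (lt_mem_nhds (half_lt_self (abs_pos.2 hf')))
  filter_upwards [hslope, self_mem_nhdsWithin] with y hy hys
  have hyx : 0 < |y - x| := abs_pos.2 (sub_ne_zero.2 hys.2)
  rwa [slope_def_field, abs_div, lt_div_iff₀ hyx] at hy

theorem HasDerivWithinAt.eventually_nhdsGT_mul_sub_lt {f : ℝ → ℝ} {f' x : ℝ} {s : Set ℝ}
    (h : HasDerivWithinAt f f' s x) (hf' : f' ≠ 0) (hs : s ∈ 𝓝[>] x) :
    ∀ᶠ y in 𝓝[>] x, |f'| / 2 * (y - x) < |f y - f x| := by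
  have hle : 𝓝[>] x ≤ 𝓝[s \ {x}] x :=
    nhdsWithin_le_of_mem <|
      sdiff_mem hs (mem_of_superset self_mem_nhdsWithin fun y hy => ne_of_gt hy)
  filter_upwards [hle (h.eventually_mul_abs_sub_lt_abs_sub hf'), self_mem_nhdsWithin] with y hy hxy
  rwa [abs_of_pos (sub_pos.2 hxy)] at hy

theorem HasDerivWithinAt.eventually_nhdsLT_mul_sub_lt {f : ℝ → ℝ} {f' x : ℝ} {s : Set ℝ}
    (h : HasDerivWithinAt f f' s x) (hf' : f' ≠ 0) (hs : s ∈ 𝓝[<] x) :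
    ∀ᶠ y in 𝓝[<] x, |f'| / 2 * (x - y) < |f y - f x| := by
  have hle : 𝓝[<] x ≤ 𝓝[s \ {x}] x :=
    nhdsWithin_le_of_mem <|
      sdiff_mem hs (mem_of_superset self_mem_nhdsWithin fun y hy => ne_of_lt hy)
  filter_upwards [hle (h.eventually_mul_abs_sub_lt_abs_sub hf'), self_mem_nhdsWithin] with y hy hyx
  rwa [abs_sub_comm, abs_of_pos (sub_pos.2 hyx)] at hy

theorem integrableOn_Ioo_one_div_sqrt_sub_const (a t : ℝ) :
    IntegrableOn (fun x => 1 / √(x - a)) (Ioo a t) := by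
  have h := ((intervalIntegral.intervalIntegrable_rpow' (r := -(1 / 2)) (a := 0) (b := t - a)
    (by norm_num)).comp_sub_right a).1
  refine (h.mono_set fun x hx => ⟨by simpa using hx.1, by simpa using hx.2.le⟩).congr_fun
    (fun x hx => ?_) measurableSet_Ioo
  simp only [Real.rpow_neg (sub_pos.2 hx.1).le, Real.sqrt_eq_rpow, one_div]

theorem integrableOn_Ioo_one_div_sqrt_const_sub (b t : ℝ) :
    IntegrableOn (fun x => 1 / √(b - x)) (Ioo t b) := by
  have h := ((intervalIntegral.intervalIntegrable_rpow' (r := -(1 / 2)) (a := 0) (b := b - t)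
    (by norm_num)).comp_sub_left b).2
  refine (h.mono_set fun x hx => ⟨by simpa using hx.1, by simpa using hx.2.le⟩).congr_fun
    (fun x hx => ?_) measurableSet_Ioo
  simp only [Real.rpow_neg (sub_pos.2 hx.2).le, Real.sqrt_eq_rpow, one_div]

theorem ContinuousOn.one_div_sqrt {g : ℝ → ℝ} {s : Set ℝ} (hg : ContinuousOn g s)
    (hpos : ∀ x ∈ s, 0 < g x) : ContinuousOn (fun x => 1 / √(g x)) s :=
  continuousOn_const.div (Real.continuous_sqrt.comp_continuousOn hg)
    fun x hx => (Real.sqrt_pos.2 (hpos x hx)).ne'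

theorem integrableOn_one_div_sqrt_of_mul_le {g u : ℝ → ℝ} {s : Set ℝ} {c : ℝ}
    (hu : IntegrableOn (fun x => 1 / √(u x)) s) (hs : MeasurableSet s) (hg : ContinuousOn g s)
    (hc : 0 < c) (hupos : ∀ x ∈ s, 0 < u x) (hle : ∀ x ∈ s, c * u x ≤ g x) :
    IntegrableOn (fun x => 1 / √(g x)) s := by
  have hgpos : ∀ x ∈ s, 0 < g x := fun x hx => (mul_pos hc (hupos x hx)).trans_le (hle x hx)
  refine (hu.const_mul (√c)⁻¹).mono' ((hg.one_div_sqrt hgpos).aestronglyMeasurable hs) ?_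
  filter_upwards [ae_restrict_mem hs] with x hx
  rw [Real.norm_of_nonneg (by positivity)]
  calc 1 / √(g x) ≤ 1 / √(c * u x) :=
        one_div_le_one_div_of_le (Real.sqrt_pos.2 (mul_pos hc (hupos x hx)))
          (Real.sqrt_le_sqrt (hle x hx))
    _ = (√c)⁻¹ * (1 / √(u x)) := by rw [Real.sqrt_mul hc.le, one_div, one_div, mul_inv]

theorem ContinuousOn.integrableOn_Ioo_of_integrableOn_ends {E : Type*} [NormedAddCommGroup E]
    {φ : ℝ → E} {a b u v : ℝ} (hφ : ContinuousOn φ (Ioo a b)) (hau : a < u) (hvb : v < b)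
    (hleft : IntegrableOn φ (Ioo a u)) (hright : IntegrableOn φ (Ioo v b)) :
    IntegrableOn φ (Ioo a b) := by
  have hmid : IntegrableOn φ (Icc u v) :=
    (hφ.mono fun x hx => ⟨hau.trans_le hx.1, hx.2.trans_lt hvb⟩).integrableOn_Icc
  refine ((hleft.union hmid).union hright).mono_set fun x hx => ?_
  by_cases hxu : x < u
  · exact Or.inl (Or.inl ⟨hx.1, hxu⟩)
  by_cases hxv : v < x
  · exact Or.inr ⟨hxv, hx.2⟩
  exact Or.inl (Or.inr ⟨not_lt.1 hxu, not_lt.1 hxv⟩)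

theorem integral_one_div_sqrt_finite_general
    (a b C : ℝ) (hab : a < b)
    (f f' : ℝ → ℝ)
    (hderiv : ∀ x ∈ Set.Icc a b, HasDerivWithinAt f (f' x) (Set.Icc a b) x)
    (ha : f a = C ^ 2) (hb : f b = C ^ 2)
    (hlt : ∀ x ∈ Set.Ioo a b, f x < C ^ 2)
    (hfa : f' a ≠ 0) (hfb : f' b ≠ 0) :
    IntegrableOn (fun x => 1 / Real.sqrt (C ^ 2 - f x)) (Set.Ioo a b) volume := by
  have hgap : ∀ x ∈ Ioo a b, |f x - C ^ 2| = C ^ 2 - f x := fun x hx => by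
    rw [abs_sub_comm, abs_of_pos (sub_pos.2 (hlt x hx))]
  have hcont : ContinuousOn (fun x => C ^ 2 - f x) (Ioo a b) :=
    continuousOn_const.sub ((HasDerivWithinAt.continuousOn hderiv).mono Ioo_subset_Icc_self)
  obtain ⟨u, hau : a < u, hu⟩ := mem_nhdsGT_iff_exists_Ioo_subset.1 <|
    inter_mem (Ioo_mem_nhdsGT hab) <|
    (hderiv a (left_mem_Icc.2 hab.le)).eventually_nhdsGT_mul_sub_lt hfa (Icc_mem_nhdsGT hab)
  obtain ⟨v, hvb : v < b, hv⟩ := mem_nhdsLT_iff_exists_Ioo_subset.1 <|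
    inter_mem (Ioo_mem_nhdsLT hab) <|
    (hderiv b (right_mem_Icc.2 hab.le)).eventually_nhdsLT_mul_sub_lt hfb (Icc_mem_nhdsLT hab)
  refine ContinuousOn.integrableOn_Ioo_of_integrableOn_ends
    (hcont.one_div_sqrt fun x hx => sub_pos.2 (hlt x hx)) hau hvb ?_ ?_
  · refine integrableOn_one_div_sqrt_of_mul_le (integrableOn_Ioo_one_div_sqrt_sub_const a u)
      measurableSet_Ioo (hcont.mono fun x hx => (hu hx).1) (half_pos (abs_pos.2 hfa))
      (fun x hx => sub_pos.2 hx.1) fun x hx => ?_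
    obtain ⟨hxab, hx⟩ := hu hx
    simp only [mem_ofPred_eq, ha, hgap x hxab] at hx
    exact hx.le
  · refine integrableOn_one_div_sqrt_of_mul_le (integrableOn_Ioo_one_div_sqrt_const_sub b v)
      measurableSet_Ioo (hcont.mono fun x hx => (hv hx).1) (half_pos (abs_pos.2 hfb))
      (fun x hx => sub_pos.2 hx.2) fun x hx => ?_
    obtain ⟨hxab, hx⟩ := hv hx
    simp only [mem_ofPred_eq, hb, hgap x hxab] at hx
    exact hx.le

/-- If `f` is `C¹` on `[a,b]` with `f(a) = f(b) = C²`, `f < C²` on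
`(a,b)` and `f'(a), f'(b) ≠ 0`, then `∫_a^b dx/√(C² - f(x))` is finite. -/
theorem integral_one_div_sqrt_finite
    (a b C : ℝ) (hab : a < b) (hC : 0 < C)
    (f f' : ℝ → ℝ)
    (hderiv : ∀ x ∈ Set.Icc a b, HasDerivWithinAt f (f' x) (Set.Icc a b) x)
    (hcont : ContinuousOn f' (Set.Icc a b))
    (ha : f a = C ^ 2) (hb : f b = C ^ 2)
    (hlt : ∀ x ∈ Set.Ioo a b, f x < C ^ 2)
    (hfa : f' a ≠ 0) (hfb : f' b ≠ 0) :
    IntegrableOn (fun x => 1 / Real.sqrt (C ^ 2 - f x)) (Set.Ioo a b) volume :=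
  integral_one_div_sqrt_finite_general a b C hab f f' hderiv ha hb hlt hfa hfb
end
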